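/- On ⨂[ℂ]^3 V, with S₁₂ := (1/2 : ℂ) • (LinearMap.id + P_{(12)}) and A₂₃ := (1/2 : ℂ) • (LinearMap.id - P_{(23)}), the operator Q := (4/3 : ℂ) • (S₁₂ ∘ₗ A₂₃ ∘ₗ S₁₂) is idempotent: Q ∘ₗ Q = Q. (This is the MOLD projection operator onto the mixed-symmetry irreducible representation of SU(N) on V^{⊗3}.) -/
import Mathlib


open scoped TensorProduct

/-- The permutation operator `P_σ` on the `m`-fold tensor power of `V = Fin N → ℂ`,
sending `v₁ ⊗ ⋯ ⊗ v_m` to `v_{σ⁻¹(1)} ⊗ ⋯ ⊗ v_{σ⁻¹(m)}`. -/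
noncomputable def permOp (N m : ℕ) (σ : Equiv.Perm (Fin m)) :
    (⨂[ℂ] _ : Fin m, (Fin N → ℂ)) →ₗ[ℂ] ⨂[ℂ] _ : Fin m, (Fin N → ℂ) :=
  (PiTensorProduct.reindex ℂ (fun _ : Fin m => (Fin N → ℂ)) σ).toLinearMap

/-- The symmetrizer `S₁₂` over the first two factors of `V^{⊗3}`. -/
noncomputable def S12 (N : ℕ) :
    (⨂[ℂ] _ : Fin 3, (Fin N → ℂ)) →ₗ[ℂ] ⨂[ℂ] _ : Fin 3, (Fin N → ℂ) :=
  (1 / 2 : ℂ) • (LinearMap.id + permOp N 3 (Equiv.swap 0 1))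

/-- The antisymmetrizer `A₂₃` over the last two factors of `V^{⊗3}`. -/
noncomputable def A23 (N : ℕ) :
    (⨂[ℂ] _ : Fin 3, (Fin N → ℂ)) →ₗ[ℂ] ⨂[ℂ] _ : Fin 3, (Fin N → ℂ) :=
  (1 / 2 : ℂ) • (LinearMap.id - permOp N 3 (Equiv.swap 1 2))


lemma permOp_comp (N m : ℕ) (σ τ : Equiv.Perm (Fin m)) :
    permOp N m σ ∘ₗ permOp N m τ = permOp N m (σ * τ) := by
  have : σ * τ = τ.trans σ := rfl
  rw [this]
  simp [permOp, ← PiTensorProduct.reindex_trans]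

lemma permOp_id (N m : ℕ) : permOp N m 1 = LinearMap.id := by
  have : (1 : Equiv.Perm (Fin m)) = Equiv.refl (Fin m) := rfl
  simp [permOp, this]

/-- The MOLD operator `Q = (4/3) S₁₂ A₂₃ S₁₂` projecting onto the mixed-symmetry
irreducible representation of `SU(N)` on `V^{⊗3}` is idempotent. -/
theorem mold_mixed_idempotent (N : ℕ) (hN : 0 < N) :
    ((4 / 3 : ℂ) • (S12 N ∘ₗ A23 N ∘ₗ S12 N)) ∘ₗ ((4 / 3 : ℂ) • (S12 N ∘ₗ A23 N ∘ₗ S12 N))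
      = (4 / 3 : ℂ) • (S12 N ∘ₗ A23 N ∘ₗ S12 N) := by
  set α : Equiv.Perm (Fin 3) := Equiv.swap 0 1 with hα
  set β : Equiv.Perm (Fin 3) := Equiv.swap 1 2 with hβ
  have hαα : α * α = 1 := by decide
  have hββ : β * β = 1 := by decide
  have hbab : β * (α * β) = α * (β * α) := by decide
  have haa : ∀ w : Equiv.Perm (Fin 3), α * (α * w) = w := by
    intro w; rw [← mul_assoc, hαα, one_mul]
  have hbb : ∀ w : Equiv.Perm (Fin 3), β * (β * w) = w := by
    intro w; rw [← mul_assoc, hββ, one_mul]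
  have hbab' : ∀ w : Equiv.Perm (Fin 3), β * (α * (β * w)) = α * (β * (α * w)) := by
    intro w
    calc β * (α * (β * w)) = (β * (α * β)) * w := by group
      _ = (α * (β * α)) * w := by rw [hbab]
      _ = α * (β * (α * w)) := by group
  rw [S12, A23, ← hα, ← hβ]
  simp only [LinearMap.comp_add, LinearMap.add_comp, LinearMap.comp_sub, LinearMap.sub_comp,
    LinearMap.comp_smul, LinearMap.smul_comp, LinearMap.id_comp, LinearMap.comp_id,
    LinearMap.comp_assoc, permOp_comp, permOp_id, smul_add, smul_sub, smul_smul, mul_assoc,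
    mul_one, one_mul, hαα, hββ, hbab, haa, hbb, hbab']
  module
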